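/- arXiv:2511.05869 — 3 statements merged into one kernel-verified Lean document; each statement's English description precedes it below -/
import Mathlib

section
/- Fix K ≥ 3, m ≥ 0, and S = (m+1)(K+1). Define Y(l, t, r) for 1 ≤ l ≤ K−1, t ≥ 0, 0 ≤ r ≤ K−l by: Y(l, 0, r) = C(K+1, l+1) if r = 0 and 0 otherwise; Y(K, t, 0) = S^t and Y(K, t, r) = 0 for r ≥ 1; and for t ≥ 1, Y(l, t, r) = (l+1)·Y(l, t−1, r) + (l+2)·Y(l+1, t−1, r−1) for 1 ≤ r ≤ K−l, and Y(l, t, 0) = (l+1)·Y(l, t−1, 0) + m(K+1)·S^{t−1}·C(K, l). Then for all t ≥ 0 and all l with 1 ≤ l ≤ K−1, the weighted sum ∑_{j=0}^{K−l} (m+1)^j · Y(l, t, j) = C(K+1, l+1)·S^t. -/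
/-- Fix K ≥ 3, m ≥ 0 and S = (m+1)(K+1). With `Y l t r` the number of l-faces of
generalized degree (m+1)^r at time t, defined by the stated initial conditions and
recursion, the weighted sum ∑_{j=0}^{K−l} (m+1)^j · Y(l, t, j) equals
C(K+1, l+1) · S^t for all t and all 1 ≤ l ≤ K−1. -/
theorem stmt_6 (K m : ℕ) (hK : 3 ≤ K) (S : ℕ) (hS : S = (m + 1) * (K + 1))
    (Y : ℕ → ℕ → ℕ → ℕ)
    (h0 : ∀ l r, 1 ≤ l → l ≤ K - 1 →
      Y l 0 r = if r = 0 then Nat.choose (K + 1) (l + 1) else 0)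
    (hK0 : ∀ t, Y K t 0 = S ^ t)
    (hKr : ∀ t r, 1 ≤ r → Y K t r = 0)
    (hrec : ∀ l t r, 1 ≤ l → l ≤ K - 1 → 1 ≤ r → r ≤ K - l →
      Y l (t + 1) r = (l + 1) * Y l t r + (l + 2) * Y (l + 1) t (r - 1))
    (hrec0 : ∀ l t, 1 ≤ l → l ≤ K - 1 →
      Y l (t + 1) 0 = (l + 1) * Y l t 0 + m * (K + 1) * S ^ t * Nat.choose K l) :
    ∀ t l, 1 ≤ l → l ≤ K - 1 →
      ∑ j ∈ Finset.range (K - l + 1), (m + 1) ^ j * Y l t j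
        = Nat.choose (K + 1) (l + 1) * S ^ t := by
  intro t
  induction t with
  | zero =>
    intro l hl1 hl2
    rw [Finset.sum_eq_single 0]
    · simp [h0 l 0 hl1 hl2]
    · intro j _ hj
      rw [h0 l j hl1 hl2, if_neg hj, mul_zero]
    · intro h; exact absurd (Finset.mem_range.mpr (by omega)) h
  | succ t IH =>
    intro l hl1 hl2
    have hlK : l + 1 ≤ K := by omega
    rw [Finset.sum_range_succ']
    -- rewrite the j ≥ 1 terms via the recursion
    have step : ∑ i ∈ Finset.range (K - l), (m + 1) ^ (i + 1) * Y l (t + 1) (i + 1)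
        = (l + 1) * (∑ i ∈ Finset.range (K - l), (m + 1) ^ (i + 1) * Y l t (i + 1))
          + (l + 2) * (m + 1) * (∑ i ∈ Finset.range (K - l), (m + 1) ^ i * Y (l + 1) t i) := by
      rw [Finset.mul_sum, Finset.mul_sum, ← Finset.sum_add_distrib]
      refine Finset.sum_congr rfl fun i hi => ?_
      have hi' : i < K - l := Finset.mem_range.mp hi
      rw [hrec l t (i + 1) hl1 hl2 (by omega) (by omega)]
      simp only [Nat.add_sub_cancel]
      ring
    rw [step, hrec0 l t hl1 hl2]
    have IH1 : (∑ i ∈ Finset.range (K - l), (m + 1) ^ (i + 1) * Y l t (i + 1)) + Y l t 0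
        = Nat.choose (K + 1) (l + 1) * S ^ t := by
      have := IH l hl1 hl2
      rw [Finset.sum_range_succ'] at this
      simpa using this
    have hinner : ∑ i ∈ Finset.range (K - l), (m + 1) ^ i * Y (l + 1) t i
        = Nat.choose (K + 1) (l + 2) * S ^ t := by
      by_cases hc : l + 1 ≤ K - 1
      · have h := IH (l + 1) (by omega) hc
        rw [show K - (l + 1) + 1 = K - l from by omega] at h
        exact h
      · have hl : l + 1 = K := by omega
        have hKl : K - l = 1 := by omega
        rw [hKl]
        simp [hl, hK0 t, show l + 2 = K + 1 from by omega]
    set C := Nat.choose (K + 1) (l + 1) with hC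
    set C2 := Nat.choose (K + 1) (l + 2) with hC2
    set Ck := Nat.choose K l with hCk
    have e1 : (K + 1) * Ck = C * (l + 1) := Nat.add_one_mul_choose_eq K l
    have e2 : C2 * (l + 2) = C * (K - l) := by
      have := Nat.choose_succ_right_eq (K + 1) (l + 1)
      rw [show K + 1 - (l + 1) = K - l from by omega] at this
      exact this
    have esum : (l + 1) + (K - l) = K + 1 := by omega
    rw [hinner, pow_zero, one_mul]
    set A := ∑ i ∈ Finset.range (K - l), (m + 1) ^ (i + 1) * Y l t (i + 1) with hA
    set Z := Y l t 0 with hZ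
    have hrhs : C * S ^ (t + 1)
        = (l + 1) * (C * S ^ t) + ((m + 1) * (C * (K - l)) + m * (C * (l + 1))) * S ^ t := by
      rw [hS, show K + 1 = (l + 1) + (K - l) from esum.symm]
      ring
    rw [hrhs, ← IH1, ← e1, ← e2]
    ring
end

section
/- Fix integers K ≥ 3 and m ≥ 0 and set S = (m+1)(K+1). Define c(l, r) for 1 ≤ l ≤ K, 0 ≤ r ≤ K−l by c(K, 0) = 1, c(l, r) = ((l+2)/(S−l−1))·c(l+1, r−1) for r ≥ 1, and c(l, 0) = C(K+1, l+1) − ∑_{j=1}^{K−l} (m+1)^j c(l, j). Then c(l, 0) = C(K+1, l+1)·m(l+1)/(S − l − 1) for all 1 ≤ l ≤ K−1. -/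
/-- Fix integers K ≥ 3 and m ≥ 0 and set S = (m+1)(K+1). With c(K,0) = 1,
c(l,r) = ((l+2)/(S−l−1))·c(l+1,r−1) for r ≥ 1, and
c(l,0) = C(K+1,l+1) − ∑_{j=1}^{K−l} (m+1)^j c(l,j), one has
c(l,0) = C(K+1,l+1)·m(l+1)/(S−l−1) for all 1 ≤ l ≤ K−1. -/
theorem stmt_8 (K m : ℕ) (hK : 3 ≤ K) (S : ℝ) (hS : S = ((m + 1) * (K + 1) : ℕ))
    (c : ℕ → ℕ → ℝ)
    (hcK : c K 0 = 1)
    (hrec : ∀ l r : ℕ, 1 ≤ l → l ≤ K - 1 → 1 ≤ r → r ≤ K - l →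
      c l r = (((l : ℝ) + 2) / (S - l - 1)) * c (l + 1) (r - 1))
    (h0 : ∀ l : ℕ, 1 ≤ l → l ≤ K - 1 →
      c l 0 = (Nat.choose (K + 1) (l + 1) : ℝ)
        - ∑ j ∈ Finset.Icc 1 (K - l), ((m : ℝ) + 1) ^ j * c l j) :
    ∀ l : ℕ, 1 ≤ l → l ≤ K - 1 →
      c l 0 = (Nat.choose (K + 1) (l + 1) : ℝ) * (m * ((l : ℝ) + 1)) / (S - l - 1) := by
  -- Key: the full generating sum equals the binomial coefficient.
  have key : ∀ u : ℕ, 1 ≤ u → u ≤ K →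
      ∑ j ∈ Finset.range (K - u + 1), ((m : ℝ) + 1) ^ j * c u j
        = (Nat.choose (K + 1) (u + 1) : ℝ) := by
    intro u hu1 huK
    rcases eq_or_lt_of_le huK with heq | hlt
    · subst heq
      simp [hcK]
    · have huK1 : u ≤ K - 1 := by omega
      have hsum := h0 u hu1 huK1
      have hicc : ∑ j ∈ Finset.Icc 1 (K - u), ((m : ℝ) + 1) ^ j * c u j
          = ∑ i ∈ Finset.range (K - u), ((m : ℝ) + 1) ^ (1 + i) * c u (1 + i) := by
        rw [← Finset.Ico_add_one_right_eq_Icc, Finset.sum_Ico_eq_sum_range]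
        simp
      rw [Finset.sum_range_succ']
      have : ∑ i ∈ Finset.range (K - u), ((m : ℝ) + 1) ^ (i + 1) * c u (i + 1)
          = ∑ i ∈ Finset.range (K - u), ((m : ℝ) + 1) ^ (1 + i) * c u (1 + i) := by
        apply Finset.sum_congr rfl
        intro i _
        rw [add_comm 1 i]
      rw [this, ← hicc]
      simp only [pow_zero, one_mul]
      rw [hsum]
      ring
  intro l hl1 hl2
  have hlK : l + 2 ≤ (m + 1) * (K + 1) := by
    have := Nat.le_mul_of_pos_left (K + 1) (show 0 < m + 1 by omega)
    omega
  have hScast : S = ((m : ℝ) + 1) * ((K : ℝ) + 1) := by rw [hS]; push_cast; ring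
  have hne : S - (l : ℝ) - 1 ≠ 0 := by
    have : (l : ℝ) + 2 ≤ ((m : ℝ) + 1) * ((K : ℝ) + 1) := by exact_mod_cast hlK
    rw [hScast]; intro h; nlinarith
  -- rewrite the Icc sum using the recursion
  have hIcc : ∑ j ∈ Finset.Icc 1 (K - l), ((m : ℝ) + 1) ^ j * c l j
      = ((m : ℝ) + 1) * (((l : ℝ) + 2) / (S - l - 1)) *
          ∑ i ∈ Finset.range (K - (l + 1) + 1), ((m : ℝ) + 1) ^ i * c (l + 1) i := by
    rw [← Finset.Ico_add_one_right_eq_Icc, Finset.sum_Ico_eq_sum_range, Finset.mul_sum]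
    have hidx : K - l + 1 - 1 = K - (l + 1) + 1 := by omega
    rw [hidx]
    apply Finset.sum_congr rfl
    intro i hi
    have hi' : i ≤ K - l - 1 := by
      simp only [Finset.mem_range] at hi; omega
    rw [hrec l (1 + i) hl1 hl2 (by omega) (by omega)]
    have : 1 + i - 1 = i := by omega
    rw [this]
    ring_nf
  rw [h0 l hl1 hl2, hIcc, key (l + 1) (by omega) (by omega)]
  have hid : (Nat.choose (K + 1) (l + 2) : ℝ) * ((l : ℝ) + 2)
      = (Nat.choose (K + 1) (l + 1) : ℝ) * ((K : ℝ) - l) := by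
    have h := Nat.choose_succ_right_eq (K + 1) (l + 1)
    have hsub : K + 1 - (l + 1) = K - l := by omega
    rw [hsub] at h
    have hKl : (↑(K - l) : ℝ) = (K : ℝ) - l := by
      have : l ≤ K := by omega
      push_cast [this]; ring
    have := congrArg (Nat.cast : ℕ → ℝ) h
    push_cast at this
    rw [← hKl]
    linarith [this]
  have hch : (Nat.choose (K + 1) (l + 1 + 1) : ℝ) = (Nat.choose (K + 1) (l + 2) : ℝ) := by norm_num
  rw [hch]
  rw [hScast] at hne ⊢
  field_simp
  nlinarith [hid, sq_nonneg ((m:ℝ)+1)]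
end

section
/- For K ≥ 3, m ≥ 1, S = (m+1)(K+1), and 1 ≤ l ≤ K−1, the telescoping product ∏_{j=l}^{K−1} C_j with C_j = (S−j−2)(j+1)/((K−j)(j+2)) equals ((l+1)/(K+1)) · C(S−l−2, K−l), where C(·,·) is the binomial coefficient. -/
/-!
Splitting off the factor `j = l`, the claim for `l` follows from the claim for `l + 1` by
the absorption identity `n * C(n - 1, k) = C(n, k + 1) * (k + 1)` with `n = S - l - 2` and
`k + 1 = K - l`; at `l = K` both sides equal `1`.
-/

theorem Nat.mul_choose_sub_one (n k : ℕ) : n * (n - 1).choose k = n.choose (k + 1) * (k + 1) := by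
  cases n with
  | zero => simp
  | succ n => simpa using Nat.add_one_mul_choose_eq n k

theorem prod_Ico_mul_div_eq_mul_choose {K S l : ℕ} (hKS : K + 1 ≤ S) (hlK : l ≤ K) :
    ∏ j ∈ Finset.Ico l K,
        ((S : ℝ) - j - 2) * ((j : ℝ) + 1) / (((K : ℝ) - j) * ((j : ℝ) + 2))
      = (((l : ℝ) + 1) / ((K : ℝ) + 1)) * (Nat.choose (S - l - 2) (K - l) : ℝ) := by
  induction hlK using Nat.decreasingInduction with
  | self => simp [div_self (Nat.cast_add_one_ne_zero (R := ℝ) K)]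
  | of_succ l hl ih =>
    rw [Finset.prod_eq_prod_Ico_succ_bot hl, ih]
    obtain ⟨k, hk⟩ : ∃ k, K - l = k + 1 := ⟨K - l - 1, by omega⟩
    have hSl : ((S - l - 2 : ℕ) : ℝ) = (S : ℝ) - l - 2 := by
      rw [Nat.cast_sub (by omega), Nat.cast_sub (by omega)]; push_cast; ring
    have hKk : (K : ℝ) - l = k + 1 := by
      rw [← Nat.cast_sub hl.le, hk]; push_cast; ring
    have habsorb := congrArg (Nat.cast : ℕ → ℝ) (Nat.mul_choose_sub_one (S - l - 2) k)
    push_cast [hSl] at habsorb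
    rw [show S - (l + 1) - 2 = S - l - 2 - 1 by omega, show K - (l + 1) = k by omega, hk, hKk]
    push_cast
    field_simp
    linear_combination ((l : ℝ) + 2) * habsorb

theorem stmt_11_general (K m l : ℕ) (hlK : l ≤ K - 1)
    (S : ℕ) (hS : S = (m + 1) * (K + 1)) :
    ∏ j ∈ Finset.Ico l K,
        ((S : ℝ) - j - 2) * ((j : ℝ) + 1) / (((K : ℝ) - j) * ((j : ℝ) + 2))
      = (((l : ℝ) + 1) / ((K : ℝ) + 1)) * (Nat.choose (S - l - 2) (K - l) : ℝ) :=
  prod_Ico_mul_div_eq_mul_choose (by rw [hS]; nlinarith) (by omega)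

/-- For K ≥ 3, m ≥ 1, S = (m+1)(K+1), and 1 ≤ l ≤ K−1, the telescoping product
∏_{j=l}^{K−1} C_j with C_j = (S−j−2)(j+1)/((K−j)(j+2)) equals
((l+1)/(K+1)) · C(S−l−2, K−l). -/
theorem stmt_11 (K m l : ℕ) (hK : 3 ≤ K) (hm : 1 ≤ m) (hl : 1 ≤ l) (hlK : l ≤ K - 1)
    (S : ℕ) (hS : S = (m + 1) * (K + 1)) :
    ∏ j ∈ Finset.Ico l K,
        ((S : ℝ) - j - 2) * ((j : ℝ) + 1) / (((K : ℝ) - j) * ((j : ℝ) + 2))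
      = (((l : ℝ) + 1) / ((K : ℝ) + 1)) * (Nat.choose (S - l - 2) (K - l) : ℝ) :=
  stmt_11_general K m l hlK S hS
end
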